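/- Existence of a canonical routing/coding decomposition (Theorem 2): Let X_in, X_out be information flow vectors with nonnegative entries satisfying the flow constraint I_k(X_in) = I_k(X_out) for every k ∈ D. For each nonempty P ⊆ D with |P| ≥ 2, let Q(P) be the collection of singleton subsets of P, and set r_{Q(P)} = x_in(P), n_{Q(P)} = x_out(P), with all other routing and coding variables 0. Then the node constraints hold: for every nonempty P ⊆ D, x_out(P) = x_in(P) + Σ_{j : P ∈ Q_j}(r_j − n_j) − Σ_{j : ∪Q_j = P}(r_j − n_j), and all r_j, n_j ≥ 0. -/

import Mathlib

/-!
Since `Q(P)` is a valid collection for `|P| ≥ 2` and `P ↦ Q(P)` is injective, every sum of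
`r - n` over collections collapses to a sum of `x_in - x_out` over sets `P` with `|P| ≥ 2`.
For `|P| ≥ 2` no `Q(P')` contains `P` and only `Q(P)` has union `P`, so the node constraint
reads `x_out(P) = x_in(P) - (x_in(P) - x_out(P))`. For `P = {k}` the collections containing
`{k}` are the `Q(P')` with `k ∈ P'` and none has union `{k}`, so the node constraint is the flow
constraint `I_k(X_in) = I_k(X_out)` with the term of `{k}` split off.
-/

open Finset

/-- `I k X` : total flow to receiver `k`. -/
noncomputable def I {α : Type*} [Fintype α] [DecidableEq α] (k : α)
    (X : Finset α → ℝ) : ℝ :=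
  ∑ P ∈ univ.filter (fun P : Finset α => k ∈ P), X P

/-- A valid collection: two or more pairwise disjoint nonempty subsets of `D`. -/
def ValidQ {α : Type*} [DecidableEq α] (Q : Finset (Finset α)) : Prop :=
  2 ≤ Q.card ∧ (∀ P ∈ Q, P.Nonempty) ∧
    ∀ P ∈ Q, ∀ P' ∈ Q, P ≠ P' → Disjoint P P'

instance {α : Type*} [DecidableEq α] : DecidablePred (ValidQ (α := α)) := by
  unfold ValidQ; infer_instance

/-- The (finite) set 𝒬 of all valid collections. -/
noncomputable def QSet (α : Type*) [Fintype α] [DecidableEq α] :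
    Finset (Finset (Finset α)) :=
  univ.filter ValidQ

/-- The collection of singleton subsets of `P`. -/
def singletonsOf {α : Type*} [DecidableEq α] (P : Finset α) : Finset (Finset α) :=
  P.image (fun k => {k})

section

variable {α : Type*} [DecidableEq α]

lemma sup_id_singletonsOf (P : Finset α) : (singletonsOf P).sup id = P := by
  ext x
  simp [singletonsOf]

lemma card_singletonsOf (P : Finset α) : #(singletonsOf P) = #P :=
  card_image_of_injective _ singleton_injective

lemma singleton_mem_singletonsOf_iff {P : Finset α} {k : α} : {k} ∈ singletonsOf P ↔ k ∈ P := by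
  simp [singletonsOf]

lemma card_eq_one_of_mem_singletonsOf {P S : Finset α} (hS : S ∈ singletonsOf P) : #S = 1 := by
  obtain ⟨k, -, rfl⟩ := mem_image.1 hS
  exact card_singleton k

lemma validQ_singletonsOf {P : Finset α} (hP : 2 ≤ #P) : ValidQ (singletonsOf P) := by
  refine ⟨(card_singletonsOf P).symm ▸ hP, ?_, ?_⟩
  · intro S hS
    exact card_pos.1 (card_eq_one_of_mem_singletonsOf hS ▸ Nat.one_pos)
  · simp only [singletonsOf, mem_image]
    rintro _ ⟨k, -, rfl⟩ _ ⟨k', -, rfl⟩ hne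
    exact disjoint_singleton.2 fun h => hne (h ▸ rfl)

variable [Fintype α]

lemma singletonsOf_mem_QSet {P : Finset α} (hP : 2 ≤ #P) : singletonsOf P ∈ QSet α :=
  mem_filter.2 ⟨mem_univ _, validQ_singletonsOf hP⟩

lemma sum_QSet_filter_sum_singletonsOf_eq {M : Type*} [AddCommMonoid M] (f : Finset α → M)
    (c : Finset (Finset α) → Prop) [DecidablePred c] :
    ∑ Q ∈ (QSet α).filter c, ∑ P ∈ univ.filter (fun P => 2 ≤ #P ∧ singletonsOf P = Q), f P
      = ∑ P ∈ univ.filter (fun P => 2 ≤ #P ∧ c (singletonsOf P)), f P := by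
  rw [← sum_fiberwise_of_maps_to (g := singletonsOf) (t := (QSet α).filter c)
    fun P hP => mem_filter.2 ⟨singletonsOf_mem_QSet (mem_filter.1 hP).2.1, (mem_filter.1 hP).2.2⟩]
  refine sum_congr rfl fun Q hQ => sum_congr ?_ fun _ _ => rfl
  ext P
  simp only [mem_filter, mem_univ, true_and]
  constructor
  · rintro ⟨hP, rfl⟩
    exact ⟨⟨hP, (mem_filter.1 hQ).2⟩, rfl⟩
  · rintro ⟨⟨hP, -⟩, rfl⟩
    exact ⟨hP, rfl⟩

lemma I_eq_add_sum_two_le_card (k : α) (X : Finset α → ℝ) :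
    I k X = X {k} + ∑ P ∈ univ.filter (fun P => 2 ≤ #P ∧ k ∈ P), X P := by
  have hsplit : univ.filter (fun P => k ∈ P) =
      insert {k} (univ.filter (fun P : Finset α => 2 ≤ #P ∧ k ∈ P)) := by
    ext P
    simp only [mem_filter, mem_univ, true_and, mem_insert]
    constructor
    · intro hk
      exact (eq_singleton_or_nontrivial hk).imp_right fun h => ⟨one_lt_card_iff_nontrivial.2 h, hk⟩
    · rintro (rfl | ⟨-, hk⟩)
      exacts [mem_singleton_self k, hk]
  rw [I, hsplit, sum_insert (by simp)]

lemma filter_two_le_card_and_eq (S : Finset α) :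
    univ.filter (fun P => 2 ≤ #P ∧ P = S) = if 2 ≤ #S then {S} else ∅ := by
  ext P
  split_ifs with hS
  · simp only [mem_filter, mem_univ, true_and, mem_singleton, and_iff_right_iff_imp]
    exact fun h => h ▸ hS
  · simp only [mem_filter, mem_univ, true_and, notMem_empty, iff_false, not_and]
    exact fun hP h => hS (h ▸ hP)

end

theorem canonical_decomposition_general {α : Type*} [Fintype α] [DecidableEq α]
    (Xin Xout : Finset α → ℝ)
    (hin : ∀ P : Finset α, 0 ≤ Xin P) (hout : ∀ P : Finset α, 0 ≤ Xout P)
    (hflow : ∀ k : α, I k Xin = I k Xout)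
    (r n : Finset (Finset α) → ℝ)
    (hr : ∀ Q : Finset (Finset α),
      r Q = ∑ P ∈ univ.filter (fun P : Finset α => 2 ≤ P.card ∧ singletonsOf P = Q), Xin P)
    (hn : ∀ Q : Finset (Finset α),
      n Q = ∑ P ∈ univ.filter (fun P : Finset α => 2 ≤ P.card ∧ singletonsOf P = Q), Xout P) :
    (∀ P : Finset α, P.Nonempty →
      Xout P = Xin P + (∑ Q ∈ (QSet α).filter (fun Q => P ∈ Q), (r Q - n Q))
        - ∑ Q ∈ (QSet α).filter (fun Q => Q.sup id = P), (r Q - n Q)) ∧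
    (∀ Q, 0 ≤ r Q) ∧ (∀ Q, 0 ≤ n Q) := by
  have hsum (c : Finset (Finset α) → Prop) [DecidablePred c] :
      ∑ Q ∈ (QSet α).filter c, (r Q - n Q)
        = ∑ P ∈ univ.filter (fun P => 2 ≤ #P ∧ c (singletonsOf P)), (Xin P - Xout P) := by
    simp only [hr, hn, ← sum_sub_distrib]
    exact sum_QSet_filter_sum_singletonsOf_eq _ c
  refine ⟨fun P hP => ?_, fun Q => hr Q ▸ sum_nonneg fun P _ => hin P,
    fun Q => hn Q ▸ sum_nonneg fun P _ => hout P⟩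
  simp only [hsum, sup_id_singletonsOf]
  obtain ⟨k, rfl⟩ | hP2 := hP.exists_eq_singleton_or_nontrivial
  · have hk := hflow k
    rw [I_eq_add_sum_two_le_card, I_eq_add_sum_two_le_card] at hk
    simp only [singleton_mem_singletonsOf_iff, filter_two_le_card_and_eq, card_singleton]
    simp only [sum_sub_distrib, Nat.not_ofNat_le_one, if_false, sum_empty]
    linarith
  · have hP2 : 2 ≤ #P := one_lt_card_iff_nontrivial.2 hP2
    have hnot_mem : univ.filter (fun Q => 2 ≤ #Q ∧ P ∈ singletonsOf Q) = ∅ :=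
      filter_false_of_mem fun Q _ ⟨_, hPQ⟩ => by
        have := card_eq_one_of_mem_singletonsOf hPQ
        omega
    rw [hnot_mem, filter_two_le_card_and_eq, if_pos hP2, sum_empty, sum_singleton]
    ring

/-- Theorem 2 (canonical decomposition): setting `r_{Q(P)} = x_in(P)`,
`n_{Q(P)} = x_out(P)` for `|P| ≥ 2` and all other variables to zero yields
nonnegative variables satisfying the node constraints. -/
theorem canonical_decomposition {α : Type*} [Fintype α] [DecidableEq α]
    (hcard : 2 ≤ Fintype.card α)
    (Xin Xout : Finset α → ℝ)
    (hin : ∀ P : Finset α, 0 ≤ Xin P) (hout : ∀ P : Finset α, 0 ≤ Xout P)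
    (hflow : ∀ k : α, I k Xin = I k Xout)
    (r n : Finset (Finset α) → ℝ)
    (hr : ∀ Q : Finset (Finset α),
      r Q = ∑ P ∈ univ.filter (fun P : Finset α => 2 ≤ P.card ∧ singletonsOf P = Q), Xin P)
    (hn : ∀ Q : Finset (Finset α),
      n Q = ∑ P ∈ univ.filter (fun P : Finset α => 2 ≤ P.card ∧ singletonsOf P = Q), Xout P) :
    (∀ P : Finset α, P.Nonempty →
      Xout P = Xin P + (∑ Q ∈ (QSet α).filter (fun Q => P ∈ Q), (r Q - n Q))
        - ∑ Q ∈ (QSet α).filter (fun Q => Q.sup id = P), (r Q - n Q)) ∧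
    (∀ Q, 0 ≤ r Q) ∧ (∀ Q, 0 ≤ n Q) :=
  canonical_decomposition_general Xin Xout hin hout hflow r n hr hn
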